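/- (Uniform diameter bound for the frequency wedges.) Let d ≥ 2, A > 0, and let B ≥ 1 be an integer. For each integer m ≥ 1 let m* be the unique power of 2 with m ≤ m* < 2m, and define the wedge W_m = {ξ ∈ ℝ^d : A(m−1) ≤ |ξ| ≤ A(m+1) and the angle between ξ and the first standard basis vector e₁ is at most 2π/(m*B)} (with the convention that ξ = 0 belongs to W_m only when m = 1). Then there exists a constant C > 0, depending only on A, B, and d, such that for every m ≥ 1 with m*B ≥ 4 and all ξ, ζ ∈ W_m, |ξ − ζ| ≤ C; i.e., the Euclidean diameters of the wedges W_m with m*B ≥ 4 are bounded uniformly in m. -/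

import Mathlib

open Real InnerProductGeometry

noncomputable section

/-- `m*`: the unique power of two with `m ≤ m* < 2m`. -/
def mstar (m : ℕ) : ℕ := 2 ^ Nat.clog 2 m

/-- The wedge `W_m ⊆ ℝ^d` of points `ξ` with `A(m−1) ≤ |ξ| ≤ A(m+1)` whose angle with the
first standard basis vector `e₁` is at most `2π/(m*B)`, with the convention that `ξ = 0`
belongs to `W_m` only when `m = 1`. -/
def wedge (d : ℕ) (hd : 0 < d) (A : ℝ) (B m : ℕ) : Set (EuclideanSpace ℝ (Fin d)) :=
  {ξ | (ξ ≠ 0 ∧ A * ((m : ℝ) - 1) ≤ ‖ξ‖ ∧ ‖ξ‖ ≤ A * ((m : ℝ) + 1) ∧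
          angle ξ (EuclideanSpace.single (⟨0, hd⟩ : Fin d) (1 : ℝ)) ≤ 2 * π / (mstar m * B)) ∨
        (ξ = 0 ∧ m = 1)}

/-! A point `ξ` of `W_m` lies within `A` of the sphere of radius `A m` radially, and within
`‖ξ‖ θ ≤ A (m + 1) · 2π / (m* B) ≤ 4πA` of the point `‖ξ‖ e₁` (chord ≤ arc), since `m ≤ m* B`.
So `W_m` sits in the ball of radius `A + 4πA` about `A m e₁`, uniformly in `m`. -/

section ChordBound

variable {V : Type*} [NormedAddCommGroup V] [InnerProductSpace ℝ V]

/-- `‖x - y‖² = 2‖x‖²(1 - cos θ)` and `1 - cos θ ≤ θ² / 2`. -/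
theorem norm_sub_le_mul_angle_of_norm_eq {x y : V} (h : ‖x‖ = ‖y‖) :
    ‖x - y‖ ≤ ‖x‖ * angle x y := by
  have hcos := one_sub_sq_div_two_le_cos (x := angle x y)
  have hsq : ‖x - y‖ ^ 2 ≤ (‖x‖ * angle x y) ^ 2 := by
    rw [sq, norm_sub_sq_eq_norm_sq_add_norm_sq_sub_two_mul_norm_mul_norm_mul_cos_angle, ← h]
    nlinarith [sq_nonneg ‖x‖]
  exact pow_le_pow_iff_left₀ (norm_nonneg _)
    (mul_nonneg (norm_nonneg _) (angle_nonneg _ _)) two_ne_zero |>.mp hsq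

theorem norm_sub_norm_smul_le_mul_angle {x e : V} (he : ‖e‖ = 1) :
    ‖x - ‖x‖ • e‖ ≤ ‖x‖ * angle x e := by
  rcases (norm_nonneg x).eq_or_lt with hx | hx
  · simp [← hx]
  · have h := norm_sub_le_mul_angle_of_norm_eq (x := x) (y := ‖x‖ • e)
      (by rw [norm_smul, he, norm_norm, mul_one])
    rwa [angle_smul_right_of_pos _ _ hx] at h

end ChordBound

theorem le_mstar_mul {m B : ℕ} (hB : 1 ≤ B) : m ≤ mstar m * B :=
  (Nat.le_pow_clog one_lt_two m).trans (Nat.le_mul_of_pos_right _ hB)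

theorem mul_succ_mul_two_pi_div_le {A m M : ℝ} (hA : 0 ≤ A) (hm : 1 ≤ m) (hmM : m ≤ M) :
    A * (m + 1) * (2 * π / M) ≤ 4 * π * A := by
  have hM : 0 < M := by linarith
  rw [mul_div_assoc', div_le_iff₀ hM]
  nlinarith [mul_nonneg hA pi_pos.le]

theorem norm_sub_smul_single_le_of_mem_wedge {d : ℕ} (hd : 0 < d) {A : ℝ} (hA : 0 ≤ A)
    {B m : ℕ} (hB : 1 ≤ B) (hm : 1 ≤ m) {ξ : EuclideanSpace ℝ (Fin d)}
    (hξ : ξ ∈ wedge d hd A B m) :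
    ‖ξ - (A * m) • EuclideanSpace.single (⟨0, hd⟩ : Fin d) (1 : ℝ)‖ ≤ A + 4 * π * A := by
  set e := EuclideanSpace.single (⟨0, hd⟩ : Fin d) (1 : ℝ)
  have he : ‖e‖ = 1 := by simp [e]
  rcases hξ with ⟨-, hlow, hup, hangle⟩ | ⟨rfl, rfl⟩
  · have hradial : ‖(‖ξ‖ - A * m) • e‖ ≤ A := by
      rw [norm_smul, he, mul_one, Real.norm_eq_abs, abs_le]
      constructor <;> linarith
    have hmM : (m : ℝ) ≤ mstar m * B := by exact_mod_cast le_mstar_mul hB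
    have hangular : ‖ξ - ‖ξ‖ • e‖ ≤ 4 * π * A :=
      calc ‖ξ - ‖ξ‖ • e‖ ≤ ‖ξ‖ * angle ξ e := norm_sub_norm_smul_le_mul_angle he
        _ ≤ A * (m + 1) * (2 * π / (mstar m * B)) :=
          mul_le_mul hup hangle (angle_nonneg _ _) (by positivity)
        _ ≤ 4 * π * A := mul_succ_mul_two_pi_div_le hA (by exact_mod_cast hm) hmM
    calc ‖ξ - (A * m) • e‖ = ‖(ξ - ‖ξ‖ • e) + (‖ξ‖ - A * m) • e‖ := by
          rw [sub_smul, sub_add_sub_cancel]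
      _ ≤ A + 4 * π * A := by linarith [norm_add_le (ξ - ‖ξ‖ • e) ((‖ξ‖ - A * m) • e)]
  · rw [zero_sub, norm_neg, norm_smul, he, Nat.cast_one, mul_one, mul_one, Real.norm_of_nonneg hA]
    linarith [mul_nonneg hA pi_pos.le]

/-- uniform diameter bound for the frequency wedges: for `d ≥ 2`,
`A > 0`, and an integer `B ≥ 1`, there exists `C > 0`, depending only on `A`, `B`, `d`,
such that for every `m ≥ 1` with `m*B ≥ 4` and all `ξ, ζ ∈ W_m`, `|ξ − ζ| ≤ C`. -/
theorem wedge_diameter_bound (d : ℕ) (hd : 2 ≤ d) (A : ℝ) (hA : 0 < A)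
    (B : ℕ) (hB : 1 ≤ B) :
    ∃ C > (0 : ℝ), ∀ m : ℕ, 1 ≤ m → 4 ≤ mstar m * B →
      ∀ ξ ∈ wedge d (by omega) A B m, ∀ ζ ∈ wedge d (by omega) A B m, ‖ξ - ζ‖ ≤ C := by
  refine ⟨2 * (A + 4 * π * A), by positivity, fun m hm _ ξ hξ ζ hζ => ?_⟩
  set c := (A * m) • EuclideanSpace.single (⟨0, by omega⟩ : Fin d) (1 : ℝ)
  have hξc := norm_sub_smul_single_le_of_mem_wedge _ hA.le hB hm hξ
  have hζc := norm_sub_smul_single_le_of_mem_wedge _ hA.le hB hm hζ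
  calc ‖ξ - ζ‖ ≤ ‖ξ - c‖ + ‖c - ζ‖ := norm_sub_le_norm_sub_add_norm_sub ξ c ζ
    _ = ‖ξ - c‖ + ‖ζ - c‖ := by rw [norm_sub_rev c ζ]
    _ ≤ 2 * (A + 4 * π * A) := by linarith

end
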